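/- arXiv:1210.8253 — 3 statements merged into one kernel-verified Lean document; each statement's English description precedes it below -/
import Mathlib

section
/- Let C ⊆ F^n be a perfect binary code containing the all-zero vector equipped with a propelinear structure x ↦ π_x, and let λ : C → ZMod 2 be a propelinear homomorphism. Then the Vasil'ev code C' = {(x + y, |x| + λ(y), x) : x ∈ F^n, y ∈ C} ⊆ F^{2n+1} is a perfect binary code that admits a propelinear structure. -/
open Finset

/-- The binary vector space `F^n`. -/
abbrev F (n : ℕ) : Type := Fin n → ZMod 2

/-- Action of a coordinate permutation: `(π x) i = x (π⁻¹ i)`. -/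
def permAct {n : ℕ} (π : Equiv.Perm (Fin n)) (x : F n) : F n := fun i => x (π⁻¹ i)

/-- `(v, π)` is an isometry fixing the code `C` set-wise. -/
def IsIsoPair {n : ℕ} (C : Set (F n)) (v : F n) (π : Equiv.Perm (Fin n)) : Prop :=
  (fun x => v + permAct π x) '' C = C

/-- `C` is a single-error-correcting perfect binary code. -/
def IsPerfectCode {n : ℕ} (C : Set (F n)) : Prop :=
  ∀ x : F n, ∃! y : F n, y ∈ C ∧ hammingDist x y ≤ 1

/-- `P` is a propelinear structure on the code `C`. -/
def IsPropStructure {n : ℕ} (C : Set (F n)) (P : F n → Equiv.Perm (Fin n)) : Prop :=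
  (∀ x ∈ C, IsIsoPair C x (P x)) ∧
  (∀ x ∈ C, ∀ y ∈ C, P (x + permAct (P x) y) = P x * P y)

/-- `C` admits a propelinear structure. -/
def IsPropelinear {n : ℕ} (C : Set (F n)) : Prop :=
  ∃ P : F n → Equiv.Perm (Fin n), IsPropStructure C P

/-- The rank of a code: dimension of its linear span over GF(2). -/
noncomputable def codeRank {n : ℕ} (C : Set (F n)) : ℕ :=
  Module.finrank (ZMod 2) (Submodule.span (ZMod 2) C)

/-- The kernel of a code `C`: codewords whose translate fixes `C`. -/
def codeKernel {n : ℕ} (C : Set (F n)) : Set (F n) :=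
  {x ∈ C | (fun c => x + c) '' C = C}

/-- A propelinear structure is normalized if codewords in the same coset
of the kernel get the same permutation. -/
def IsNormalized {n : ℕ} (C : Set (F n)) (P : F n → Equiv.Perm (Fin n)) : Prop :=
  ∀ x ∈ C, ∀ y ∈ C, x + y ∈ codeKernel C → P x = P y

/-- A code is transitive if its automorphism group acts transitively on it. -/
def IsTransitive {n : ℕ} (C : Set (F n)) : Prop :=
  ∀ x ∈ C, ∀ y ∈ C, ∃ v π, IsIsoPair C v π ∧ v + permAct π x = y

/-- The (ZMod 2) weight parity `|x| = Σ_i x_i`. -/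
def wt {n : ℕ} (x : F n) : ZMod 2 := ∑ i, x i

/-- Assemble a vector of `F^(2n+1)` from a first block of `n` coordinates,
a middle coordinate and a last block of `n` coordinates. -/
def vasVec {n : ℕ} (a : F n) (b : ZMod 2) (c : F n) : F (2 * n + 1) :=
  fun i =>
    if h : (i : ℕ) < n then a ⟨i, h⟩
    else if h' : (i : ℕ) = n then b
    else c ⟨(i : ℕ) - (n + 1), by have := i.isLt; omega⟩

/-- The Vasil'ev code of `C` with function `lam`. -/
def vasCode {n : ℕ} (C : Set (F n)) (lam : F n → ZMod 2) : Set (F (2 * n + 1)) :=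
  {w | ∃ x : F n, ∃ y ∈ C, w = vasVec (x + y) (wt x + lam y) x}

/-- Assemble a vector of `F^(tm+t+m)` from blocks of `tm`, `t` and `m` coordinates. -/
def mollVec {t m : ℕ} (x : F (t * m)) (b : F t) (c : F m) : F (t * m + t + m) :=
  fun i =>
    if h : (i : ℕ) < t * m then x ⟨i, h⟩
    else if h' : (i : ℕ) < t * m + t then b ⟨(i : ℕ) - t * m, by omega⟩
    else c ⟨(i : ℕ) - (t * m + t), by have := i.isLt; omega⟩

/-- First generalized parity-check function: `p1(x)_i = Σ_j x_{ij}`. -/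
def p1 {t m : ℕ} (x : F (t * m)) : F t := fun i => ∑ j : Fin m, x (finProdFinEquiv (i, j))

/-- Second generalized parity-check function: `p2(x)_j = Σ_i x_{ij}`. -/
def p2 {t m : ℕ} (x : F (t * m)) : F m := fun j => ∑ i : Fin t, x (finProdFinEquiv (i, j))

/-- The Mollard code of `Ct` and `Cm` with function `f`. -/
def mollCode {t m : ℕ} (Ct : Set (F t)) (Cm : Set (F m)) (f : F t → F m) :
    Set (F (t * m + t + m)) :=
  {w | ∃ x : F (t * m), ∃ y ∈ Ct, ∃ z ∈ Cm, w = mollVec x (y + p1 x) (z + p2 x + f y)}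

section Helpers

variable {n : ℕ}

lemma addF_self (x : F n) : x + x = 0 := by
  have key : ∀ u : ZMod 2, u + u = 0 := by decide
  funext i; exact key (x i)

lemma hd_add_left (v x y : F n) : hammingDist (v + x) (v + y) = hammingDist x y := by
  unfold hammingDist
  congr 1
  apply Finset.filter_congr
  intro i _
  simp

lemma wt_add (x y : F n) : wt (x + y) = wt x + wt y := by
  simp [wt, Finset.sum_add_distrib]

lemma wt_permAct (π : Equiv.Perm (Fin n)) (x : F n) : wt (permAct π x) = wt x := by
  simpa [wt, permAct] using Equiv.sum_comp π⁻¹ x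

lemma wt_add_wt (x y : F n) : wt x + wt y = (hammingDist x y : ZMod 2) := by
  have key : ∀ u v : ZMod 2, u + v = if u ≠ v then (1 : ZMod 2) else 0 := by decide
  rw [hammingDist, Finset.card_filter, Nat.cast_sum, wt, wt, ← Finset.sum_add_distrib]
  apply Finset.sum_congr rfl
  intro i _
  rw [key]
  split <;> simp

lemma permAct_add (π : Equiv.Perm (Fin n)) (x y : F n) :
    permAct π (x + y) = permAct π x + permAct π y := rfl

lemma permAct_mul (π σ : Equiv.Perm (Fin n)) (x : F n) :
    permAct π (permAct σ x) = permAct (π * σ) x := rfl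

lemma permAct_one (x : F n) : permAct 1 x = x := rfl

end Helpers
section Blocks

variable {n : ℕ}

/-- Index equivalence for the three blocks of `F (2n+1)`. -/
def vasEquiv (n : ℕ) : (Fin n ⊕ (Fin 1 ⊕ Fin n)) ≃ Fin (2 * n + 1) :=
  ((Equiv.refl (Fin n)).sumCongr finSumFinEquiv).trans
    (finSumFinEquiv.trans (finCongr (by omega)))

lemma vasEquiv_inl (i : Fin n) : ((vasEquiv n (Sum.inl i) : Fin (2*n+1)) : ℕ) = i := by
  simp [vasEquiv]

lemma vasEquiv_inm (j : Fin 1) : ((vasEquiv n (Sum.inr (Sum.inl j)) : Fin (2*n+1)) : ℕ) = n := by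
  simp [vasEquiv, Fin.ext_iff]

lemma vasEquiv_inr (k : Fin n) :
    ((vasEquiv n (Sum.inr (Sum.inr k)) : Fin (2*n+1)) : ℕ) = n + 1 + k := by
  simp [vasEquiv, Fin.ext_iff]
  omega

lemma vasVec_apply (a : F n) (b : ZMod 2) (c : F n) (s : Fin n ⊕ (Fin 1 ⊕ Fin n)) :
    vasVec a b c (vasEquiv n s) = Sum.elim a (Sum.elim (fun _ => b) c) s := by
  rcases s with i | j | k
  · have h := vasEquiv_inl (n := n) i
    simp only [vasVec]
    rw [dif_pos (by omega)]
    simp [Fin.ext_iff, h]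
  · have h := vasEquiv_inm (n := n) j
    simp only [vasVec]
    rw [dif_neg (by omega), dif_pos (by omega)]
    simp
  · have h := vasEquiv_inr (n := n) k
    simp only [vasVec]
    rw [dif_neg (by omega), dif_neg (by omega)]
    simp only [Sum.elim_inr]
    congr 1
    simp [Fin.ext_iff]
    omega

lemma vasVec_inj {a b c a' b' c'} (h : vasVec a b c = vasVec (n := n) a' b' c') :
    a = a' ∧ b = b' ∧ c = c' := by
  refine ⟨funext fun i => ?_, ?_, funext fun k => ?_⟩
  · have := congrFun h (vasEquiv n (Sum.inl i)); simpa [vasVec_apply] using this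
  · have := congrFun h (vasEquiv n (Sum.inr (Sum.inl 0))); simpa [vasVec_apply] using this
  · have := congrFun h (vasEquiv n (Sum.inr (Sum.inr k))); simpa [vasVec_apply] using this

lemma vasVec_surj (w : F (2 * n + 1)) : ∃ a b c, w = vasVec a b c := by
  refine ⟨fun i => w (vasEquiv n (Sum.inl i)), w (vasEquiv n (Sum.inr (Sum.inl 0))),
    fun k => w (vasEquiv n (Sum.inr (Sum.inr k))), funext fun i => ?_⟩
  obtain ⟨s, rfl⟩ := (vasEquiv n).surjective i
  rw [vasVec_apply]
  rcases s with i | j | k <;> simp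
  exact congrArg (fun t => w (vasEquiv n (Sum.inr (Sum.inl t)))) (Subsingleton.elim _ _)

lemma vasVec_add (a b c a' b' c') :
    vasVec a b c + vasVec (n := n) a' b' c' = vasVec (a + a') (b + b') (c + c') := by
  funext i
  obtain ⟨s, rfl⟩ := (vasEquiv n).surjective i
  simp only [Pi.add_apply, vasVec_apply]
  rcases s with i | j | k <;> simp

lemma hammingDist_vasVec (a b c a' b' c') :
    hammingDist (vasVec a b c) (vasVec (n := n) a' b' c')
      = hammingDist a a' + (if b = b' then 0 else 1) + hammingDist c c' := by
  have h1 : ∀ (x y : F (2*n+1)), hammingDist x y = ∑ i, if x i ≠ y i then 1 else 0 := by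
    intro x y; rw [hammingDist, Finset.card_filter]
  have h2 : ∀ m, ∀ (x y : F m), hammingDist x y = ∑ i, if x i ≠ y i then 1 else 0 := by
    intro m x y; rw [hammingDist, Finset.card_filter]
  rw [h1, ← Equiv.sum_comp (vasEquiv n) (fun i => if vasVec a b c i ≠ vasVec a' b' c' i then 1 else 0)]
  rw [Fintype.sum_sum_type, Fintype.sum_sum_type]
  simp only [vasVec_apply, Sum.elim_inl, Sum.elim_inr]
  rw [h2 n a a', h2 n c c']
  simp [Finset.sum_ite_eq]
  by_cases hb : b = b' <;> simp [hb] <;> ring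

end Blocks
section Code

variable {n : ℕ} {C : Set (F n)} {lam : F n → ZMod 2}

lemma mem_vasCode_iff (a : F n) (b : ZMod 2) (c : F n) :
    vasVec a b c ∈ vasCode C lam ↔ (a + c ∈ C ∧ b = wt c + lam (a + c)) := by
  constructor
  · rintro ⟨x, y, hy, h⟩
    obtain ⟨h1, h2, h3⟩ := vasVec_inj h
    subst h3
    have : a + c = y := by rw [h1, add_comm, ← add_assoc, addF_self, zero_add]
    rw [this]
    exact ⟨hy, h2⟩
  · rintro ⟨h1, h2⟩
    exact ⟨c, a + c, h1, by rw [h2]; congr 1; rw [add_comm c (a+c), add_assoc, addF_self, add_zero]⟩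

/-- The block permutation on `F (2n+1)` induced by `π` acting on both outer blocks. -/
def blockPerm (n : ℕ) (π : Equiv.Perm (Fin n)) : Equiv.Perm (Fin (2 * n + 1)) :=
  (vasEquiv n).permCongr (π.sumCongr ((Equiv.refl (Fin 1)).sumCongr π))

lemma permAct_blockPerm (π : Equiv.Perm (Fin n)) (a : F n) (b : ZMod 2) (c : F n) :
    permAct (blockPerm n π) (vasVec a b c) = vasVec (permAct π a) b (permAct π c) := by
  funext i
  obtain ⟨s, rfl⟩ := (vasEquiv n).surjective i
  have hinv : (blockPerm n π)⁻¹ (vasEquiv n s)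
      = vasEquiv n ((π⁻¹.sumCongr ((Equiv.refl (Fin 1)).sumCongr π⁻¹)) s) := by
    simp [blockPerm, Equiv.permCongr, Equiv.equivCongr, Equiv.Perm.inv_def,
      Equiv.symm_trans_apply, Equiv.sumCongr_symm, Equiv.sumCongr_apply]
  rw [permAct, hinv, vasVec_apply, vasVec_apply]
  rcases s with i | j | k <;> simp [permAct]

lemma blockPerm_mul (π σ : Equiv.Perm (Fin n)) :
    blockPerm n (π * σ) = blockPerm n π * blockPerm n σ := by
  ext i
  obtain ⟨s, rfl⟩ := (vasEquiv n).surjective i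
  simp [blockPerm, Equiv.permCongr, Equiv.equivCongr, Equiv.Perm.mul_apply]
  rcases s with i | j | k <;> rfl

end Code
section More

variable {n : ℕ}

lemma hd_zero (u v : F n) : hammingDist u v = hammingDist 0 (u + v) := by
  have h := hd_add_left u 0 (u + v)
  have h2 : u + (u + v) = v := by linear_combination addF_self u
  rw [add_zero, h2] at h
  exact h

lemma hd_zero_add (u v : F n) :
    hammingDist 0 (u + v) ≤ hammingDist 0 u + hammingDist 0 v := by
  have h := hammingDist_triangle (0 : F n) u (u + v)
  have h2 : hammingDist u (u + v) = hammingDist 0 v := by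
    rw [hd_zero u (u + v)]
    congr 1
    linear_combination addF_self u
  rw [h2] at h
  exact h

lemma zmod2_two (u : ZMod 2) : u + u = 0 := by revert u; decide

lemma zmod2_ne {u v : ZMod 2} (h : u ≠ v) : u = v + 1 := by
  revert h; revert u v; decide

lemma zmod2_add_one_ne (v : ZMod 2) : v + 1 ≠ v := by revert v; decide

def yOf {n : ℕ} (w : F (2 * n + 1)) : F n :=
  fun i => w (vasEquiv n (Sum.inl i)) + w (vasEquiv n (Sum.inr (Sum.inr i)))

lemma yOf_vasVec (a : F n) (b : ZMod 2) (c : F n) : yOf (vasVec a b c) = a + c := by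
  funext i
  simp [yOf, vasVec_apply]

/-- The key combination formula for the Vasil'ev propelinear structure. -/
lemma vasComb (lam : F n → ZMod 2) (π : Equiv.Perm (Fin n)) (x1 y1 x2 y2 : F n) :
    vasVec (x1 + y1) (wt x1 + lam y1) x1
        + permAct (blockPerm n π) (vasVec (x2 + y2) (wt x2 + lam y2) x2)
      = vasVec ((x1 + permAct π x2) + (y1 + permAct π y2))
          (wt (x1 + permAct π x2) + (lam y1 + lam y2)) (x1 + permAct π x2) := by
  rw [permAct_blockPerm, vasVec_add, permAct_add, wt_add, wt_permAct]
  have h1 : x1 + y1 + (permAct π x2 + permAct π y2)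
      = x1 + permAct π x2 + (y1 + permAct π y2) := by ring
  have h2 : wt x1 + lam y1 + (wt x2 + lam y2)
      = wt x1 + wt x2 + (lam y1 + lam y2) := by ring
  rw [h1, h2]

end More
lemma vasPerfect {n : ℕ} (C : Set (F n)) (hC : IsPerfectCode C) (lam : F n → ZMod 2) :
    IsPerfectCode (vasCode C lam) := by
  intro w
  obtain ⟨a, b, c, rfl⟩ := vasVec_surj w
  obtain ⟨z, ⟨hzC, hz1⟩, hzu⟩ := hC (a + c)
  set x0 : F n := if b = wt c + lam z then c else a + z with hx0def
  have hcand_mem : vasVec (x0 + z) (wt x0 + lam z) x0 ∈ vasCode C lam := by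
    rw [mem_vasCode_iff]
    have hz' : x0 + z + x0 = z := by linear_combination addF_self x0
    rw [hz']
    exact ⟨hzC, rfl⟩
  -- the ZMod 2 weight relation
  have hwt : wt (a + c) + wt z = ((hammingDist (a + c) z : ℕ) : ZMod 2) := wt_add_wt _ _
  refine ⟨vasVec (x0 + z) (wt x0 + lam z) x0, ⟨hcand_mem, ?_⟩, ?_⟩
  · -- distance at most one
    rw [hammingDist_vasVec]
    by_cases hb : b = wt c + lam z
    · have hx0 : x0 = c := by rw [hx0def, if_pos hb]
      rw [hx0, hammingDist_self, if_pos hb]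
      have e1 : hammingDist a (c + z) = hammingDist (a + c) z := by
        rw [hd_zero a (c + z), hd_zero (a + c) z, add_assoc]
      omega
    · have hx0 : x0 = a + z := by rw [hx0def, if_neg hb]
      have e0 : a + z + z = a := by linear_combination addF_self z
      rw [hx0, e0, hammingDist_self]
      have e1 : hammingDist c (a + z) = hammingDist (a + c) z := by
        rw [hd_zero c (a + z), hd_zero (a + c) z]
        congr 1
        ring
      rw [e1]
      by_cases hd0 : hammingDist (a + c) z = 0
      · rw [hd0]; split <;> omega
      · have hd1 : hammingDist (a + c) z = 1 := by omega
        have hcast : wt a + wt c + wt z = 1 := by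
          rw [wt_add] at hwt; rw [hwt, hd1]; norm_num
        have hmid : b = wt (a + z) + lam z := by
          rw [zmod2_ne hb, wt_add]
          linear_combination hcast + zmod2_two 1 - zmod2_two (wt a) - zmod2_two (wt z)
        rw [if_pos hmid, hd1]
  · -- uniqueness
    rintro w' ⟨⟨x, y, hyC, rfl⟩, hd⟩
    rw [hammingDist_vasVec] at hd
    have htri : hammingDist (a + c) y ≤ hammingDist a (x + y) + hammingDist c x := by
      rw [hd_zero (a + c) y, hd_zero a (x + y), hd_zero c x]
      have h := hd_zero_add (a + (x + y)) (c + x)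
      have harg : a + (x + y) + (c + x) = a + c + y := by linear_combination addF_self x
      rwa [harg] at h
    have hyz : y = z := hzu y ⟨hyC, by omega⟩
    subst hyz
    suffices hx : x = x0 by rw [hx]
    by_cases hd0 : hammingDist (a + c) y = 0
    · have hz' : y = a + c := (eq_of_hammingDist_eq_zero hd0).symm
      have e1 : hammingDist a (x + y) = hammingDist c x := by
        rw [hz', hd_zero a (x + (a + c)), hd_zero c x]
        congr 1
        linear_combination addF_self a
      have hcx : hammingDist c x = 0 := by omega
      have hcx' : x = c := (eq_of_hammingDist_eq_zero hcx).symm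
      by_cases hb : b = wt c + lam y
      · rw [hcx', hx0def, if_pos hb]
      · rw [hcx', hx0def, if_neg hb, hz']
        linear_combination -addF_self a
    · have hd1 : hammingDist (a + c) y = 1 := by omega
      have hite : b = wt x + lam y := by
        by_contra hne
        rw [if_neg hne] at hd
        omega
      have hcast : wt a + wt c + wt y = 1 := by
        rw [wt_add] at hwt; rw [hwt, hd1]; norm_num
      by_cases hcx : hammingDist c x = 0
      · have hcx' : x = c := (eq_of_hammingDist_eq_zero hcx).symm
        have hb : b = wt c + lam y := by rw [hite, hcx']
        rw [hcx', hx0def, if_pos hb]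
      · have hax : hammingDist a (x + y) = 0 := by omega
        have hax' : a = x + y := eq_of_hammingDist_eq_zero hax
        have hx' : x = a + y := by rw [hax']; linear_combination -addF_self y
        have hb : ¬ b = wt c + lam y := by
          intro hbe
          have h1 : wt c + lam y = wt x + lam y := by rw [← hbe, hite]
          have h2 : wt c = wt x := by
            have := add_right_cancel h1; exact this
          rw [hx', wt_add] at h2
          have : (0 : ZMod 2) = 1 := by
            linear_combination h2 + hcast - zmod2_two (wt c)
          exact absurd this (by decide)
        rw [hx', hx0def, if_neg hb]
lemma vasProp {n : ℕ} (C : Set (F n)) (P : F n → Equiv.Perm (Fin n))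
    (hP : IsPropStructure C P) (lam : F n → ZMod 2)
    (hlam : ∀ x ∈ C, ∀ y ∈ C, lam (x + permAct (P x) y) = lam x + lam y) :
    IsPropelinear (vasCode C lam) := by
  obtain ⟨hPiso, hPmul⟩ := hP
  refine ⟨fun w => blockPerm n (P (yOf w)), ?_, ?_⟩
  · rintro u ⟨x1, y1, hy1, rfl⟩
    have hy : yOf (vasVec (x1 + y1) (wt x1 + lam y1) x1) = y1 := by
      rw [yOf_vasVec]; linear_combination addF_self x1
    show IsIsoPair _ _ (blockPerm n (P (yOf _)))
    rw [hy]
    apply Set.Subset.antisymm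
    · rintro _ ⟨w, hw, rfl⟩
      obtain ⟨x2, y2, hy2, rfl⟩ := hw
      show vasVec (x1 + y1) (wt x1 + lam y1) x1
          + permAct (blockPerm n (P y1)) (vasVec (x2 + y2) (wt x2 + lam y2) x2) ∈ _
      rw [vasComb, ← hlam y1 hy1 y2 hy2]
      exact ⟨x1 + permAct (P y1) x2, y1 + permAct (P y1) y2,
        by rw [← hPiso y1 hy1]; exact ⟨y2, hy2, rfl⟩, rfl⟩
    · rintro w' ⟨x', y', hy', rfl⟩
      have hy'' : y' ∈ (fun x => y1 + permAct (P y1) x) '' C := by rw [hPiso y1 hy1]; exact hy'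
      obtain ⟨y2, hy2, hy2e⟩ := hy''
      refine ⟨vasVec (permAct (P y1)⁻¹ (x1 + x') + y2)
        (wt (permAct (P y1)⁻¹ (x1 + x')) + lam y2) (permAct (P y1)⁻¹ (x1 + x')),
        ⟨permAct (P y1)⁻¹ (x1 + x'), y2, hy2, rfl⟩, ?_⟩
      show vasVec (x1 + y1) (wt x1 + lam y1) x1 + permAct (blockPerm n (P y1)) _ = _
      rw [vasComb, ← hlam y1 hy1 y2 hy2]
      have hπx : permAct (P y1) (permAct (P y1)⁻¹ (x1 + x')) = x1 + x' := by
        rw [permAct_mul, mul_inv_cancel, permAct_one]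
      have hx2 : x1 + permAct (P y1) (permAct (P y1)⁻¹ (x1 + x')) = x' := by
        rw [hπx]; linear_combination addF_self x1
      have hy2' : y1 + permAct (P y1) y2 = y' := hy2e
      rw [hx2, hy2']
  · rintro u ⟨x1, y1, hy1, rfl⟩ v ⟨x2, y2, hy2, rfl⟩
    have h1 : yOf (vasVec (x1 + y1) (wt x1 + lam y1) x1) = y1 := by
      rw [yOf_vasVec]; linear_combination addF_self x1
    have h2 : yOf (vasVec (x2 + y2) (wt x2 + lam y2) x2) = y2 := by
      rw [yOf_vasVec]; linear_combination addF_self x2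
    show blockPerm n (P (yOf (_ + permAct (blockPerm n (P (yOf _))) _))) = _
    rw [h1, vasComb, ← hlam y1 hy1 y2 hy2, yOf_vasVec]
    have h3 : x1 + permAct (P y1) x2 + (y1 + permAct (P y1) y2) + (x1 + permAct (P y1) x2)
        = y1 + permAct (P y1) y2 := by linear_combination addF_self (x1 + permAct (P y1) x2)
    rw [h3, hPmul y1 hy1 y2 hy2, blockPerm_mul]
    show _ = blockPerm n (P (yOf _)) * blockPerm n (P (yOf _))
    rw [h1, h2]
/-- The Vasil'ev code built from a propelinear perfect code `C` and a
propelinear homomorphism `lam : C → ZMod 2` is perfect and propelinear. -/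
theorem vasilev_propelinear {n : ℕ} (C : Set (F n))
    (hC : IsPerfectCode C) (h0 : (0 : F n) ∈ C)
    (P : F n → Equiv.Perm (Fin n)) (hP : IsPropStructure C P)
    (lam : F n → ZMod 2)
    (hlam : ∀ x ∈ C, ∀ y ∈ C, lam (x + permAct (P x) y) = lam x + lam y) :
    IsPerfectCode (vasCode C lam) ∧ IsPropelinear (vasCode C lam) := by
  exact ⟨vasPerfect C hC lam, vasProp C P hP lam hlam⟩
end

section
/- Let C^t ⊆ F^t and C^m ⊆ F^m be perfect binary codes containing the all-zero vectors, and let M(C^t, C^m) = {(x, y + p1(x), z + p2(x)) : x ∈ F^{tm}, y ∈ C^t, z ∈ C^m} ⊆ F^{tm+t+m} be the Mollard code with f ≡ 0. Then rank(M(C^t, C^m)) = tm + rank(C^t) + rank(C^m). -/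
open Finset

section Aux

variable {t m : ℕ}

lemma zmod2_add_self : ∀ a : ZMod 2, a + a = 0 := by decide

lemma zmod2_cases : ∀ r : ZMod 2, r = 0 ∨ r = 1 := by decide

lemma mollVec_apply_fst (x : F (t * m)) (b : F t) (c : F m) (i : Fin (t * m + t + m))
    (h : (i : ℕ) < t * m) : mollVec x b c i = x ⟨i, h⟩ := by
  simp only [mollVec]; rw [dif_pos h]

lemma mollVec_apply_snd (x : F (t * m)) (b : F t) (c : F m) (i : Fin (t * m + t + m))
    (h1 : ¬ (i : ℕ) < t * m) (h2 : (i : ℕ) < t * m + t) :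
    mollVec x b c i = b ⟨(i : ℕ) - t * m, by omega⟩ := by
  simp only [mollVec]; rw [dif_neg h1, dif_pos h2]

lemma mollVec_apply_thd (x : F (t * m)) (b : F t) (c : F m) (i : Fin (t * m + t + m))
    (h1 : ¬ (i : ℕ) < t * m) (h2 : ¬ (i : ℕ) < t * m + t) :
    mollVec x b c i = c ⟨(i : ℕ) - (t * m + t), by have := i.isLt; omega⟩ := by
  simp only [mollVec]; rw [dif_neg h1, dif_neg h2]

lemma mollVec_add (x x' : F (t * m)) (b b' : F t) (c c' : F m) :
    mollVec (x + x') (b + b') (c + c') = mollVec x b c + mollVec x' b' c' := by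
  funext i
  simp only [mollVec, Pi.add_apply]
  split_ifs <;> rfl

lemma p1_add (x x' : F (t * m)) : p1 (x + x') = p1 x + p1 x' := by
  funext i
  simp [p1, Finset.sum_add_distrib]

lemma p2_add (x x' : F (t * m)) : p2 (x + x') = p2 x + p2 x' := by
  funext j
  simp [p2, Finset.sum_add_distrib]

set_option maxHeartbeats 2000000 in
/-- The Mollard shear map as a linear equivalence. -/
def mollEquiv (t m : ℕ) : (F (t * m) × F t × F m) ≃ₗ[ZMod 2] F (t * m + t + m) where
  toFun p := mollVec p.1 (p.2.1 + p1 p.1) (p.2.2 + p2 p.1)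
  invFun w :=
    (fun i : Fin (t * m) => w ⟨i, by have := i.isLt; omega⟩,
     (fun i : Fin t => w ⟨t * m + i, by have := i.isLt; omega⟩) +
       p1 (fun i : Fin (t * m) => w ⟨i, by have := i.isLt; omega⟩),
     (fun j : Fin m => w ⟨t * m + t + j, by have := j.isLt; omega⟩) +
       p2 (fun i : Fin (t * m) => w ⟨i, by have := i.isLt; omega⟩))
  left_inv := by
    rintro ⟨x, y, z⟩
    dsimp only
    have hx : (fun i : Fin (t * m) =>
        mollVec x (y + p1 x) (z + p2 x) ⟨i, by have := i.isLt; omega⟩) = x := by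
      funext i
      rw [mollVec_apply_fst x (y + p1 x) (z + p2 x) _ i.isLt]
    rw [hx]
    refine Prod.ext rfl (Prod.ext ?_ ?_)
    · funext i
      have h1 : ¬ (t * m + (i : ℕ) < t * m) := by omega
      have h2 : t * m + (i : ℕ) < t * m + t := by have := i.isLt; omega
      simp only [Pi.add_apply]
      rw [mollVec_apply_snd x (y + p1 x) (z + p2 x) _ h1 h2]
      have he : (⟨t * m + (i : ℕ) - t * m, by omega⟩ : Fin t) = i := by
        apply Fin.ext; simp
      rw [he, Pi.add_apply, add_assoc, zmod2_add_self, add_zero]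
    · funext j
      have h1 : ¬ (t * m + t + (j : ℕ) < t * m) := by omega
      have h2 : ¬ (t * m + t + (j : ℕ) < t * m + t) := by omega
      simp only [Pi.add_apply]
      rw [mollVec_apply_thd x (y + p1 x) (z + p2 x) _ h1 h2]
      have he : (⟨t * m + t + (j : ℕ) - (t * m + t), by have := j.isLt; omega⟩ : Fin m) = j := by
        apply Fin.ext; simp
      rw [he, Pi.add_apply, add_assoc, zmod2_add_self, add_zero]
  right_inv := by
    intro w
    dsimp only
    funext i
    by_cases h1 : (i : ℕ) < t * m
    · rw [mollVec_apply_fst _ _ _ i h1]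
    · by_cases h2 : (i : ℕ) < t * m + t
      · rw [mollVec_apply_snd _ _ _ i h1 h2]
        simp only [Pi.add_apply]
        rw [add_assoc, zmod2_add_self, add_zero]
        apply congrArg w
        apply Fin.ext
        simp only [Fin.val_mk]
        omega
      · rw [mollVec_apply_thd _ _ _ i h1 h2]
        simp only [Pi.add_apply]
        rw [add_assoc, zmod2_add_self, add_zero]
        apply congrArg w
        apply Fin.ext
        simp only [Fin.val_mk]
        have := i.isLt
        omega
  map_add' := by
    rintro ⟨x, y, z⟩ ⟨x', y', z'⟩
    show mollVec (x + x') (y + y' + p1 (x + x')) (z + z' + p2 (x + x')) = _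
    rw [p1_add, p2_add, add_add_add_comm y y', add_add_add_comm z z', mollVec_add]
  map_smul' := by
    rintro r ⟨x, y, z⟩
    rcases zmod2_cases r with rfl | rfl
    · rw [RingHom.id_apply, zero_smul, zero_smul]
      show mollVec 0 (0 + p1 0) (0 + p2 0) = 0
      have hp1 : p1 (0 : F (t * m)) = 0 := by funext i; simp [p1]
      have hp2 : p2 (0 : F (t * m)) = 0 := by funext j; simp [p2]
      rw [hp1, hp2, add_zero, add_zero]
      funext i
      simp only [mollVec]
      split_ifs <;> rfl
    · rw [RingHom.id_apply, one_smul, one_smul]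

lemma mollEquiv_apply (p : F (t * m) × F t × F m) :
    mollEquiv t m p = mollVec p.1 (p.2.1 + p1 p.1) (p.2.2 + p2 p.1) := rfl

lemma mollCode_eq_image (Ct : Set (F t)) (Cm : Set (F m)) :
    mollCode Ct Cm (fun _ => 0) = (mollEquiv t m) '' (Set.univ ×ˢ Ct ×ˢ Cm) := by
  ext w
  constructor
  · rintro ⟨x, y, hy, z, hz, rfl⟩
    exact ⟨(x, y, z), ⟨trivial, hy, hz⟩, by simp [mollEquiv_apply]⟩
  · rintro ⟨⟨x, y, z⟩, ⟨-, hy, hz⟩, rfl⟩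
    exact ⟨x, y, hy, z, hz, by simp [mollEquiv_apply]⟩

/-- A product of submodules is linearly equivalent to the product of the subtypes. -/
def prodSubEquiv {M N : Type*} [AddCommGroup M] [AddCommGroup N]
    [Module (ZMod 2) M] [Module (ZMod 2) N]
    (p : Submodule (ZMod 2) M) (q : Submodule (ZMod 2) N) :
    (p.prod q) ≃ₗ[ZMod 2] p × q where
  toFun x := (⟨x.1.1, x.2.1⟩, ⟨x.1.2, x.2.2⟩)
  map_add' _ _ := rfl
  map_smul' _ _ := rfl
  invFun y := ⟨(y.1.1, y.2.1), ⟨y.1.2, y.2.2⟩⟩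
  left_inv _ := rfl
  right_inv _ := rfl

lemma span_prod_eq (Ct : Set (F t)) (Cm : Set (F m)) (h0t : (0 : F t) ∈ Ct)
    (h0m : (0 : F m) ∈ Cm) :
    Submodule.span (ZMod 2) (Set.univ ×ˢ Ct ×ˢ Cm : Set (F (t * m) × F t × F m)) =
      (⊤ : Submodule (ZMod 2) (F (t * m))).prod
        ((Submodule.span (ZMod 2) Ct).prod (Submodule.span (ZMod 2) Cm)) := by
  apply le_antisymm
  · rw [Submodule.span_le]
    rintro ⟨x, y, z⟩ ⟨-, hy, hz⟩
    exact ⟨trivial, Submodule.subset_span hy, Submodule.subset_span hz⟩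
  · set S : Set (F (t * m) × F t × F m) := Set.univ ×ˢ Ct ×ˢ Cm with hS
    rintro ⟨x, y, z⟩ ⟨-, hy, hz⟩
    have hx : (x, (0 : F t), (0 : F m)) ∈ Submodule.span (ZMod 2) S :=
      Submodule.subset_span ⟨trivial, h0t, h0m⟩
    set j2 : F t →ₗ[ZMod 2] (F (t * m) × F t × F m) :=
      LinearMap.prod 0 (LinearMap.prod LinearMap.id 0) with hj2
    set j3 : F m →ₗ[ZMod 2] (F (t * m) × F t × F m) :=
      LinearMap.prod 0 (LinearMap.prod 0 LinearMap.id) with hj3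
    have key2 : Submodule.map j2 (Submodule.span (ZMod 2) Ct) ≤ Submodule.span (ZMod 2) S := by
      rw [Submodule.map_span]
      apply Submodule.span_mono
      rintro _ ⟨a, ha, rfl⟩
      exact ⟨trivial, ha, h0m⟩
    have key3 : Submodule.map j3 (Submodule.span (ZMod 2) Cm) ≤ Submodule.span (ZMod 2) S := by
      rw [Submodule.map_span]
      apply Submodule.span_mono
      rintro _ ⟨a, ha, rfl⟩
      exact ⟨trivial, h0t, ha⟩
    have hy' : ((0 : F (t * m)), y, (0 : F m)) ∈ Submodule.span (ZMod 2) S :=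
      key2 ⟨y, hy, rfl⟩
    have hz' : ((0 : F (t * m)), (0 : F t), z) ∈ Submodule.span (ZMod 2) S :=
      key3 ⟨z, hz, rfl⟩
    have heq : (x, y, z) = (x, (0 : F t), (0 : F m)) + ((0 : F (t * m)), y, (0 : F m)) +
        ((0 : F (t * m)), (0 : F t), z) := by
      simp [Prod.ext_iff]
    rw [heq]
    exact Submodule.add_mem _ (Submodule.add_mem _ hx hy') hz'

end Aux

/-- The Mollard code with `f ≡ 0` has rank `tm + rank(C^t) + rank(C^m)`. -/
theorem mollard_rank {t m : ℕ} (Ct : Set (F t)) (Cm : Set (F m))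
    (hCt : IsPerfectCode Ct) (h0t : (0 : F t) ∈ Ct)
    (hCm : IsPerfectCode Cm) (h0m : (0 : F m) ∈ Cm) :
    codeRank (mollCode Ct Cm (fun _ => 0)) = t * m + codeRank Ct + codeRank Cm := by
  rw [codeRank, mollCode_eq_image]
  have himg : (mollEquiv t m) '' (Set.univ ×ˢ Ct ×ˢ Cm) =
      ((mollEquiv t m).toLinearMap : (F (t * m) × F t × F m) →ₗ[ZMod 2] F (t * m + t + m)) ''
        (Set.univ ×ˢ Ct ×ˢ Cm) := rfl
  rw [himg, ← Submodule.map_span, span_prod_eq Ct Cm h0t h0m,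
    LinearEquiv.finrank_map_eq]
  rw [LinearEquiv.finrank_eq (prodSubEquiv _ _), Module.finrank_prod,
    LinearEquiv.finrank_eq (prodSubEquiv _ _), Module.finrank_prod,
    finrank_top, Module.finrank_fin_fun]
  rw [codeRank, codeRank, add_assoc]
end

section
/- If there exists a propelinear perfect binary code of length n containing the all-zero vector with rank r, then there exists a propelinear perfect binary code of length 2n+1 containing the all-zero vector with rank r + n (obtained as the Vasil'ev code with the zero function λ ≡ 0). -/
open Finset

/-
The Vasil'ev code with `λ = 0` is the image of `F^n × C` under the injective linear map
`(x, y) ↦ (x + y, |x|, x)`. Hence its span is the image of `F^n × ⟨C⟩`, of dimension `n + r`.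

Perfectness: a word `(a, b, c)` is within distance one only of codewords `(x + y, |x|, x)`
with `d(a + c, y) ≤ 1`, i.e. with `y` the codeword of `C` nearest to `a + c`; and two codewords
with the same `y` differ by `(x, |x|, x)` with `x ≠ 0`, of weight `2 wt(x) + (wt(x) mod 2) ≥ 3`.

Propelinearity: the permutation of `(x + y, |x|, x)` is `π_y` acting on both blocks of length `n`
and fixing the middle coordinate; `(x + y, |x|, x) ↦ y` is additive and equivariant, so the
propelinear identities of `C` lift.
-/

theorem hammingNorm_add_le {ι : Type*} {β : ι → Type*} [Fintype ι]
    [∀ i, AddZeroClass (β i)] [∀ i, DecidableEq (β i)] (x y : ∀ i, β i) :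
    hammingNorm (x + y) ≤ hammingNorm x + hammingNorm y := by
  classical
  refine (card_le_card fun i hi => ?_).trans (card_union_le _ _)
  simp only [mem_filter, mem_univ, true_and, mem_union, Pi.add_apply] at hi ⊢
  by_contra! h
  simp [h.1, h.2] at hi

theorem ZMod.eq_add_one_of_ne : ∀ {b u : ZMod 2}, b ≠ u → b = u + 1 := by
  decide

namespace Vasilev

variable {n : ℕ}

def left (i : Fin n) : Fin (2 * n + 1) := ⟨i, by omega⟩

def mid : Fin (2 * n + 1) := ⟨n, by omega⟩

def right (i : Fin n) : Fin (2 * n + 1) := ⟨n + 1 + i, by omega⟩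

@[simp] lemma vasVec_left (a : F n) (b : ZMod 2) (c : F n) (i : Fin n) :
    vasVec a b c (left i) = a i := by
  simp [vasVec, left]

@[simp] lemma vasVec_mid (a : F n) (b : ZMod 2) (c : F n) : vasVec a b c mid = b := by
  simp [vasVec, mid]

@[simp] lemma vasVec_right (a : F n) (b : ZMod 2) (c : F n) (i : Fin n) :
    vasVec a b c (right i) = c i := by
  have hlt : ¬ (right i : ℕ) < n := by simp only [right]; omega
  have hne : ¬ (right i : ℕ) = n := by simp only [right]; omega
  simp only [vasVec, dif_neg hlt, dif_neg hne]
  simp [right]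

lemma index_cases (i : Fin (2 * n + 1)) :
    (∃ j, i = left j) ∨ i = mid ∨ ∃ j, i = right j := by
  rcases lt_trichotomy (i : ℕ) n with h | h | h
  · exact .inl ⟨⟨i, h⟩, rfl⟩
  · exact .inr (.inl (Fin.ext h))
  · refine .inr (.inr ⟨⟨i - (n + 1), by omega⟩, Fin.ext ?_⟩)
    simp only [right]
    omega

lemma vec_ext {w w' : F (2 * n + 1)} (hl : ∀ j, w (left j) = w' (left j)) (hm : w mid = w' mid)
    (hr : ∀ j, w (right j) = w' (right j)) : w = w' := by
  funext i
  rcases index_cases i with ⟨j, rfl⟩ | rfl | ⟨j, rfl⟩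
  exacts [hl j, hm, hr j]

noncomputable def splitEquiv : Fin n ⊕ Fin 1 ⊕ Fin n ≃ Fin (2 * n + 1) :=
  Equiv.ofBijective (Sum.elim left (Sum.elim (fun _ => mid) right)) <| by
    refine ⟨?_, fun i => ?_⟩
    · rintro (i | i | i) (j | j | j) h <;>
        simp_all [left, mid, right, Fin.ext_iff] <;> omega
    · rcases index_cases i with ⟨j, rfl⟩ | rfl | ⟨j, rfl⟩
      exacts [⟨.inl j, rfl⟩, ⟨.inr (.inl 0), rfl⟩, ⟨.inr (.inr j), rfl⟩]

lemma sum_split {M : Type*} [AddCommMonoid M] (f : Fin (2 * n + 1) → M) :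
    ∑ i, f i = ∑ j, f (left j) + f mid + ∑ j, f (right j) := by
  rw [← Fintype.sum_equiv splitEquiv
    (Sum.elim (f ∘ left) (Sum.elim (fun _ => f mid) (f ∘ right))) f
    (by rintro (j | j | j) <;> rfl)]
  simp [Fintype.sum_sum_type, add_assoc]

lemma vasVec_add (a a' : F n) (b b' : ZMod 2) (c c' : F n) :
    vasVec a b c + vasVec a' b' c' = vasVec (a + a') (b + b') (c + c') :=
  vec_ext (by simp) (by simp) (by simp)

lemma vasVec_surjective (w : F (2 * n + 1)) : ∃ a b c, w = vasVec a b c :=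
  ⟨fun j => w (left j), w mid, fun j => w (right j), vec_ext (by simp) (by simp) (by simp)⟩

lemma hammingDist_vasVec (a a' : F n) (b b' : ZMod 2) (c c' : F n) :
    hammingDist (vasVec a b c) (vasVec a' b' c') =
      hammingDist a a' + (if b ≠ b' then 1 else 0) + hammingDist c c' := by
  simp only [hammingDist, card_filter]
  rw [sum_split]
  simp

lemma hammingDist_eq_hammingNorm_add (x y : F n) : hammingDist x y = hammingNorm (x + y) := by
  rw [hammingDist_eq_hammingNorm, ZModModule.neg_eq_self]

lemma wt_add (x y : F n) : wt (x + y) = wt x + wt y := by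
  simp [wt, sum_add_distrib]

lemma wt_eq_hammingNorm (x : F n) : wt x = hammingNorm x := by
  have hbit : ∀ v : ZMod 2, v = ((if v ≠ 0 then 1 else 0 : ℕ) : ZMod 2) := by decide
  rw [hammingNorm, card_filter, Nat.cast_sum, wt]
  exact sum_congr rfl fun i _ => hbit (x i)

lemma wt_add_eq_hammingDist (x y : F n) : wt x + wt y = hammingDist x y := by
  rw [← wt_add, wt_eq_hammingNorm, hammingDist_eq_hammingNorm_add]

lemma hammingDist_add_right (x y z : F n) : hammingDist (x + z) (y + z) = hammingDist x y := by
  rw [hammingDist_eq_hammingNorm_add, hammingDist_eq_hammingNorm_add, add_add_add_comm,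
    ZModModule.add_self, add_zero]

lemma hammingDist_le_hammingDist_vasVec (a c x y : F n) (b β : ZMod 2) :
    hammingDist (a + c) y ≤ hammingDist (vasVec a b c) (vasVec (x + y) β x) := by
  have hsplit : a + c + y = (a + (x + y)) + (c + x) := by
    rw [show a + (x + y) + (c + x) = a + c + y + (x + x) by abel, ZModModule.add_self, add_zero]
  have := hammingNorm_add_le (a + (x + y)) (c + x)
  rw [hammingDist_vasVec]
  simp only [hammingDist_eq_hammingNorm_add, hsplit]
  omega

lemma exists_vasVec_hammingDist_le_one {a c y : F n} (b β : ZMod 2)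
    (hy : hammingDist (a + c) y ≤ 1) :
    ∃ x, hammingDist (vasVec a b c) (vasVec (x + y) (wt x + β) x) ≤ 1 := by
  by_cases hb : b = wt c + β
  · refine ⟨c, ?_⟩
    rwa [hammingDist_vasVec, if_neg (not_not.mpr hb), hammingDist_self, add_zero, add_zero,
      hammingDist_eq_hammingNorm_add, ← add_assoc, ← hammingDist_eq_hammingNorm_add]
  · refine ⟨a + y, ?_⟩
    have hca : hammingDist c (a + y) = hammingDist (a + c) y := by
      simp only [hammingDist_eq_hammingNorm_add]
      congr 1
      abel
    have hwt : wt (a + y) = wt c + hammingDist (a + c) y := by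
      rw [← hca, ← wt_add_eq_hammingDist, ← add_assoc, CharTwo.add_self_eq_zero, zero_add]
    rw [hammingDist_vasVec, add_assoc a, ZModModule.add_self, add_zero, hammingDist_self, hca]
    rcases Nat.le_one_iff_eq_zero_or_eq_one.mp hy with h0 | h1
    · rw [h0]
      split_ifs <;> omega
    · have : b = wt (a + y) + β := by
        rw [hwt, h1, Nat.cast_one, add_right_comm]
        exact ZMod.eq_add_one_of_ne hb
      rw [h1, if_neg (not_not.mpr this)]

lemma three_le_hammingDist_vasVec {x x' : F n} (y : F n) (β : ZMod 2) (hx : x ≠ x') :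
    3 ≤ hammingDist (vasVec (x + y) (wt x + β) x) (vasVec (x' + y) (wt x' + β) x') := by
  rw [hammingDist_vasVec, hammingDist_add_right]
  have hpos : 0 < hammingDist x x' := hammingDist_pos.mpr hx
  rcases (show hammingDist x x' = 1 ∨ 2 ≤ hammingDist x x' by omega) with h1 | h2
  · have hpar : wt x + β ≠ wt x' + β := by
      intro h
      have := wt_add_eq_hammingDist x x'
      rw [add_right_cancel h, CharTwo.add_self_eq_zero, h1, Nat.cast_one] at this
      exact zero_ne_one this
    rw [if_pos hpar]
    omega
  · split_ifs <;> omega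

theorem isPerfectCode_vasCode {C : Set (F n)} (lam : F n → ZMod 2) (hC : IsPerfectCode C) :
    IsPerfectCode (vasCode C lam) := by
  intro w
  obtain ⟨a, b, c, rfl⟩ := vasVec_surjective w
  obtain ⟨y, ⟨hyC, hy⟩, hy_unique⟩ := hC (a + c)
  obtain ⟨x, hx⟩ := exists_vasVec_hammingDist_le_one b (lam y) hy
  refine ⟨_, ⟨⟨x, y, hyC, rfl⟩, hx⟩, ?_⟩
  rintro _ ⟨⟨x', y', hy'C, rfl⟩, hx'⟩
  obtain rfl : y' = y :=
    hy_unique y' ⟨hy'C, (hammingDist_le_hammingDist_vasVec a c x' y' b _).trans hx'⟩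
  by_contra hne
  have hsep := three_le_hammingDist_vasVec y' (lam y') fun h : x' = x => hne (h ▸ rfl)
  have := hammingDist_triangle_left (vasVec (x' + y') (wt x' + lam y') x')
    (vasVec (x + y') (wt x + lam y') x) (vasVec a b c)
  omega

def vasLin : F n × F n →ₗ[ZMod 2] F (2 * n + 1) :=
  (AddMonoidHom.mk' (fun p => vasVec (p.1 + p.2) (wt p.1) p.1)
    fun p q => by
      simp only [vasVec_add, wt_add, Prod.fst_add, Prod.snd_add]
      abel_nf).toZModLinearMap 2

@[simp] lemma vasLin_apply (p : F n × F n) : vasLin p = vasVec (p.1 + p.2) (wt p.1) p.1 := rfl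

lemma vasLin_injective : Function.Injective (vasLin (n := n)) := by
  rw [← LinearMap.ker_eq_bot, LinearMap.ker_eq_bot']
  rintro ⟨x, y⟩ h
  have hx : x = 0 := funext fun i => by simpa using congrFun h (right i)
  subst hx
  have hy : y = 0 := funext fun i => by simpa using congrFun h (left i)
  rw [hy, Prod.mk_zero_zero]

lemma vasCode_zero_eq_image (C : Set (F n)) :
    vasCode C (fun _ => 0) = vasLin '' (Set.univ ×ˢ C) := by
  ext w
  simp [vasCode, eq_comm]

lemma codeRank_vasCode {C : Set (F n)} (h0 : (0 : F n) ∈ C) :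
    codeRank (vasCode C (fun _ => 0)) = codeRank C + n := by
  set f := vasLin ∘ₗ LinearMap.prodMap LinearMap.id (Submodule.span (ZMod 2) C).subtype
  have hf : Function.Injective f :=
    vasLin_injective.comp (Function.injective_id.prodMap (Submodule.injective_subtype _))
  have hrange : LinearMap.range f = Submodule.span (ZMod 2) (vasCode C (fun _ => 0)) := by
    rw [LinearMap.range_comp, LinearMap.range_prodMap, LinearMap.range_id, Submodule.range_subtype,
      vasCode_zero_eq_image, Submodule.span_image, Submodule.span_prod_eq _ (Set.mem_univ 0) h0,
      Submodule.span_univ]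
  rw [codeRank, ← hrange, LinearMap.finrank_range_of_inj hf, Module.finrank_prod,
    Module.finrank_fin_fun, codeRank, add_comm]

noncomputable def blockPerm : Equiv.Perm (Fin n) →* Equiv.Perm (Fin (2 * n + 1)) :=
  splitEquiv.permCongrHom.toMonoidHom.comp <| (Equiv.Perm.sumCongrHom _ _).comp <|
    (MonoidHom.id _).prod <| (Equiv.Perm.sumCongrHom _ _).comp <|
      (1 : _ →* _).prod (MonoidHom.id _)

lemma blockPerm_apply (σ : Equiv.Perm (Fin n)) (s : Fin n ⊕ Fin 1 ⊕ Fin n) :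
    blockPerm σ (splitEquiv s) = splitEquiv (Equiv.sumCongr σ (Equiv.sumCongr 1 σ) s) := by
  simp [blockPerm, Equiv.permCongrHom_coe, Equiv.permCongr_apply]

@[simp] lemma blockPerm_left (σ : Equiv.Perm (Fin n)) (i : Fin n) :
    blockPerm σ (left i) = left (σ i) :=
  blockPerm_apply σ (.inl i)

@[simp] lemma blockPerm_mid (σ : Equiv.Perm (Fin n)) : blockPerm σ mid = mid :=
  blockPerm_apply σ (.inr (.inl 0))

@[simp] lemma blockPerm_right (σ : Equiv.Perm (Fin n)) (i : Fin n) :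
    blockPerm σ (right i) = right (σ i) :=
  blockPerm_apply σ (.inr (.inr i))

lemma permAct_blockPerm_vasVec (σ : Equiv.Perm (Fin n)) (a : F n) (b : ZMod 2) (c : F n) :
    permAct (blockPerm σ) (vasVec a b c) = vasVec (permAct σ a) b (permAct σ c) :=
  vec_ext (by simp [permAct, ← map_inv]) (by simp [permAct, ← map_inv])
    (by simp [permAct, ← map_inv])

lemma permAct_surjective (σ : Equiv.Perm (Fin n)) : Function.Surjective (permAct σ) :=
  fun x => ⟨permAct σ⁻¹ x, funext fun i => by simp [permAct]⟩

lemma wt_permAct (σ : Equiv.Perm (Fin n)) (x : F n) : wt (permAct σ x) = wt x :=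
  Equiv.sum_comp σ⁻¹ x

lemma permAct_blockPerm_vasLin (σ : Equiv.Perm (Fin n)) (p : F n × F n) :
    permAct (blockPerm σ) (vasLin p) = vasLin (permAct σ p.1, permAct σ p.2) := by
  simp only [vasLin_apply, permAct_blockPerm_vasVec, wt_permAct]
  rfl

def vasSnd (w : F (2 * n + 1)) : F n := fun i => w (left i) + w (right i)

@[simp] lemma vasSnd_vasLin (p : F n × F n) : vasSnd (vasLin p) = p.2 := by
  funext i
  simp [vasSnd, add_comm (p.1 i), add_assoc, CharTwo.add_self_eq_zero]

lemma isIsoPair_vasCode {C : Set (F n)} {y : F n} {σ : Equiv.Perm (Fin n)}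
    (h : IsIsoPair C y σ) (x : F n) :
    IsIsoPair (vasCode C (fun _ => 0)) (vasLin (x, y)) (blockPerm σ) := by
  have hcomm : (fun w => vasLin (x, y) + permAct (blockPerm σ) w) ∘ vasLin =
      vasLin ∘ Prod.map (fun x' => x + permAct σ x') (fun y' => y + permAct σ y') := by
    funext p
    simp only [Function.comp_apply, permAct_blockPerm_vasLin, ← map_add, Prod.map, Prod.mk_add_mk]
  have hsurj : Function.Surjective fun x' => x + permAct σ x' :=
    (add_left_surjective x).comp (permAct_surjective σ)
  unfold IsIsoPair
  rw [vasCode_zero_eq_image, ← Set.image_comp, hcomm, Set.image_comp, Set.prodMap_image_prod,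
    Set.image_univ_of_surjective hsurj, h]

theorem isPropelinear_vasCode {C : Set (F n)} (hC : IsPropelinear C) :
    IsPropelinear (vasCode C (fun _ => 0)) := by
  obtain ⟨P, hiso, hmul⟩ := hC
  refine ⟨fun w => blockPerm (P (vasSnd w)), ?_, ?_⟩
  · intro w hw
    rw [vasCode_zero_eq_image] at hw
    obtain ⟨⟨x, y⟩, ⟨-, hy⟩, rfl⟩ := hw
    simpa only [vasSnd_vasLin] using isIsoPair_vasCode (hiso y hy) x
  · rw [vasCode_zero_eq_image]
    rintro _ ⟨⟨x, y⟩, ⟨-, hy⟩, rfl⟩ _ ⟨⟨x', y'⟩, ⟨-, hy'⟩, rfl⟩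
    simp only [vasSnd_vasLin, permAct_blockPerm_vasLin, ← map_add, Prod.mk_add_mk,
      hmul y hy y' hy', map_mul]

end Vasilev

/-- From a propelinear perfect code of length `n` and rank `r` one obtains a
propelinear perfect code of length `2n+1` and rank `r + n`. -/
theorem vasilev_rank_transfer {n r : ℕ}
    (h : ∃ C : Set (F n),
      IsPerfectCode C ∧ (0 : F n) ∈ C ∧ IsPropelinear C ∧ codeRank C = r) :
    ∃ C' : Set (F (2 * n + 1)),
      IsPerfectCode C' ∧ (0 : F (2 * n + 1)) ∈ C' ∧ IsPropelinear C' ∧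
        codeRank C' = r + n := by
  obtain ⟨C, hperf, h0, hprop, rfl⟩ := h
  refine ⟨vasCode C (fun _ => 0), Vasilev.isPerfectCode_vasCode _ hperf, ?_,
    Vasilev.isPropelinear_vasCode hprop, Vasilev.codeRank_vasCode h0⟩
  rw [Vasilev.vasCode_zero_eq_image]
  exact ⟨0, ⟨Set.mem_univ 0, h0⟩, map_zero _⟩
end
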